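/- arXiv:2602.01463 — 5 statements merged into one kernel-verified Lean document; each statement's English description precedes it below -/
import Mathlib

section
/- Fix a real number x with x ∉ [0,1]. Set a = 1 and b = (x-1)/x (note x ≠ 0). Then (1-x)·a + x·b = 0, (1-x)·b + x·a = (2x-1)/x ≠ 0, and a - b = 1/x ≠ 0. Consequently there do not exist isometries U, V, S, T ∈ M_{2,1}(ℂ) (columns u,v,s,t ∈ ℂ² of unit norm) satisfying diag(|a|²,|b|²) = |((1-x)a+xb)|²·uu* + |((1-x)b+xa)|²·vv* + x(1-x)(|a-b|²·ss* + |a-b|²·tt*). -/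
/-! With `a = 1` and `b = (x - 1)/x` the coefficient of `uu*` vanishes, and `x(1 - x) < 0`, so the
right-hand side has the form `α vv* - N` with `N` positive semidefinite. On a nonzero `w ⟂ v` its
quadratic form is `-w*Nw ≤ 0`, whereas `diag(1, |b|²)` is positive definite because `b ≠ 0`. -/

namespace Matrix

variable {m n K : Type*} [Fintype m] [Fintype n] [Field K]

theorem exists_ne_zero_mulVec_eq_zero_of_card_lt (A : Matrix m n K)
    (h : Fintype.card m < Fintype.card n) : ∃ w ≠ 0, A *ᵥ w = 0 := by
  classical
  have := (toLin' A).ker_ne_bot_of_finrank_lt (by simpa using h)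
  obtain ⟨w, hw, hw0⟩ := Submodule.exists_mem_ne_zero_of_ne_bot this
  exact ⟨w, hw0, hw⟩

variable [PartialOrder K] [IsOrderedAddMonoid K] [StarRing K]

theorem PosDef.ne_smul_mul_conjTranspose_sub {P N : Matrix n n K} (hP : P.PosDef)
    (hN : N.PosSemidef) (α : K) (V : Matrix n m K) (h : Fintype.card m < Fintype.card n) :
    P ≠ α • (V * Vᴴ) - N := by
  classical
  obtain ⟨w, hw0, hw⟩ := exists_ne_zero_mulVec_eq_zero_of_card_lt Vᴴ h
  intro hPN
  have hpos := hP.dotProduct_mulVec_pos hw0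
  have hnn := hN.dotProduct_mulVec_nonneg w
  rw [hPN, sub_mulVec, smul_mulVec, ← mulVec_mulVec, hw, mulVec_zero, smul_zero, zero_sub,
    dotProduct_neg] at hpos
  exact (neg_pos.mp hpos).not_ge hnn

end Matrix

theorem mul_one_sub_neg_of_notMem_Icc {x : ℝ} (hx : x ∉ Set.Icc (0 : ℝ) 1) : x * (1 - x) < 0 := by
  rw [Set.mem_Icc, not_and_or, not_le, not_le] at hx
  rcases hx with hx | hx
  · exact mul_neg_of_neg_of_pos hx (by linarith)
  · exact mul_neg_of_pos_of_neg (by linarith) (by linarith)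

open Matrix
open scoped ComplexOrder

/-- The weighted parallelogram isometry identity fails for every `x ∉ [0,1]`,
already in dimension one (scalars `a = 1`, `b = (x-1)/x`). -/
theorem no_isometry_identity_outside_unit_interval (x : ℝ) (hx : x ∉ Set.Icc (0:ℝ) 1) :
    ((1 - (x:ℂ)) * 1 + (x:ℂ) * (((x:ℂ) - 1) / (x:ℂ)) = 0) ∧
    ((1 - (x:ℂ)) * (((x:ℂ) - 1) / (x:ℂ)) + (x:ℂ) * 1 = (2 * (x:ℂ) - 1) / (x:ℂ)) ∧
    ((1 - (x:ℂ)) * (((x:ℂ) - 1) / (x:ℂ)) + (x:ℂ) * 1 ≠ 0) ∧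
    ((1:ℂ) - ((x:ℂ) - 1) / (x:ℂ) = 1 / (x:ℂ)) ∧
    ((1:ℂ) - ((x:ℂ) - 1) / (x:ℂ) ≠ 0) ∧
    ¬ ∃ U V S T : Matrix (Fin 2) (Fin 1) ℂ,
        Uᴴ * U = 1 ∧ Vᴴ * V = 1 ∧ Sᴴ * S = 1 ∧ Tᴴ * T = 1 ∧
        Matrix.diagonal ![((‖(1:ℂ)‖ ^ 2 : ℝ) : ℂ), ((‖(((x:ℂ) - 1) / (x:ℂ))‖ ^ 2 : ℝ) : ℂ)]
          = ((‖(1 - (x:ℂ)) * 1 + (x:ℂ) * (((x:ℂ) - 1) / (x:ℂ))‖ ^ 2 : ℝ) : ℂ) • (U * Uᴴ)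
            + ((‖(1 - (x:ℂ)) * (((x:ℂ) - 1) / (x:ℂ)) + (x:ℂ) * 1‖ ^ 2 : ℝ) : ℂ) • (V * Vᴴ)
            + ((x * (1 - x) : ℝ) : ℂ) •
                (((‖(1:ℂ) - ((x:ℂ) - 1) / (x:ℂ)‖ ^ 2 : ℝ) : ℂ) • (S * Sᴴ)
                  + ((‖(1:ℂ) - ((x:ℂ) - 1) / (x:ℂ)‖ ^ 2 : ℝ) : ℂ) • (T * Tᴴ)) := by
  have hneg := mul_one_sub_neg_of_notMem_Icc hx
  have hx0 : (x : ℂ) ≠ 0 := Complex.ofReal_ne_zero.mpr (by rintro rfl; simp at hneg)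
  have hx1 : (x : ℂ) - 1 ≠ 0 := by
    rw [sub_ne_zero, Ne, Complex.ofReal_eq_one]; rintro rfl; simp at hneg
  have h2x : 2 * (x : ℂ) - 1 ≠ 0 := by
    rw [sub_ne_zero]; norm_cast; intro h; nlinarith
  have hsum : (1 - (x:ℂ)) * (((x:ℂ) - 1) / (x:ℂ)) + (x:ℂ) * 1 = (2 * (x:ℂ) - 1) / (x:ℂ) := by
    field_simp; ring
  have hdiff : (1:ℂ) - ((x:ℂ) - 1) / (x:ℂ) = 1 / (x:ℂ) := by field_simp; ring
  have hzero : (1 - (x:ℂ)) * 1 + (x:ℂ) * (((x:ℂ) - 1) / (x:ℂ)) = 0 := by field_simp; ring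
  refine ⟨hzero, hsum, hsum ▸ div_ne_zero h2x hx0, hdiff, hdiff ▸ div_ne_zero one_ne_zero hx0, ?_⟩
  rintro ⟨U, V, S, T, -, -, -, -, hE⟩
  rw [hzero, norm_zero, zero_pow two_ne_zero, Complex.ofReal_zero, zero_smul, zero_add,
    ← sub_neg_eq_add, ← neg_smul] at hE
  have hP :
      (diagonal ![((‖(1:ℂ)‖ ^ 2 : ℝ) : ℂ), ((‖(((x:ℂ) - 1) / (x:ℂ))‖ ^ 2 : ℝ) : ℂ)]).PosDef := by
    refine PosDef.diagonal (Fin.forall_fin_two.mpr ⟨?_, ?_⟩) <;> refine Complex.zero_lt_real.mpr ?_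
    · simp
    · exact pow_pos (norm_pos_iff.mpr (div_ne_zero hx1 hx0)) 2
  have hD : (0 : ℂ) ≤ ((‖(1:ℂ) - ((x:ℂ) - 1) / (x:ℂ)‖ ^ 2 : ℝ) : ℂ) :=
    Complex.zero_le_real.mpr (sq_nonneg _)
  have hc : (0 : ℂ) ≤ -((x * (1 - x) : ℝ) : ℂ) := by
    rw [← Complex.ofReal_neg, Complex.zero_le_real]; exact neg_nonneg.mpr hneg.le
  have hN := (((posSemidef_self_mul_conjTranspose S).smul hD).add
    ((posSemidef_self_mul_conjTranspose T).smul hD)).smul hc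
  exact hP.ne_smul_mul_conjTranspose_sub hN _ V (by simp) hE
end

section
/- Let Z be the 3×3 truncated shift (Z e₁ = e₂, Z e₂ = e₃, Z e₃ = 0). Then Re Z = (Z+Z*)/2 has eigenvalues 0, ±2^{-1/2}, and Im Z = (Z−Z*)/(2i) is unitarily similar to Re Z via the diagonal unitary D = diag(1, −i, −1), i.e. Im Z = D (Re Z) D*. In particular the singular values of Re Z and Im Z both equal (2^{-1/2}, 2^{-1/2}, 0), and for every p > 2 we have μ₃((|Z|^p+|Z*|^p)/2)^{1/p}) = 2^{-1/p} > 2^{-1/2} = μ₃(Re Z) + μ₁(Im Z). -/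
open Matrix ComplexOrder

namespace Matrix.PosSemidef

/-- The positive semidefinite square root of a positive semidefinite matrix
(the definition removed from Mathlib, restored with its old meaning). -/
noncomputable def sqrt {𝕜 : Type*} [RCLike 𝕜] {n : Type*} [Fintype n] [DecidableEq n]
    {A : Matrix n n 𝕜} (hA : PosSemidef A) : Matrix n n 𝕜 :=
  hA.1.eigenvectorUnitary.1 * diagonal ((↑) ∘ (√·) ∘ hA.1.eigenvalues) *
  (star hA.1.eigenvectorUnitary : Matrix n n 𝕜)

theorem posSemidef_sqrt {𝕜 : Type*} [RCLike 𝕜] {n : Type*} [Fintype n] [DecidableEq n]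
    {A : Matrix n n 𝕜} (hA : PosSemidef A) : PosSemidef hA.sqrt := by
  have h := (PosSemidef.diagonal (R := 𝕜) (n := n)
    (d := ((↑) ∘ (√·) ∘ hA.1.eigenvalues)) (fun i => by
      simp only [Pi.zero_apply, Function.comp_apply]
      exact RCLike.ofReal_nonneg.mpr (Real.sqrt_nonneg _))).mul_mul_conjTranspose_same
    (hA.1.eigenvectorUnitary : Matrix n n 𝕜)
  unfold sqrt
  rw [Matrix.star_eq_conjTranspose]
  exact h

end Matrix.PosSemidef

/-- `|X| = (XᴴX)^{1/2}`. -/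
noncomputable def absM {m n : ℕ} (X : Matrix (Fin m) (Fin n) ℂ) : Matrix (Fin n) (Fin n) ℂ :=
  (Matrix.posSemidef_conjTranspose_mul_self X).sqrt

/-- Functional-calculus real power of a Hermitian matrix. -/
noncomputable def mrpow {n : ℕ} (A : Matrix (Fin n) (Fin n) ℂ) (p : ℝ) :
    Matrix (Fin n) (Fin n) ℂ :=
  cfc (fun x : ℝ => x ^ p) A

/-- The `i`-th largest eigenvalue of a Hermitian matrix (indices starting at 0). -/
noncomputable def eigDesc {n : ℕ} (A : Matrix (Fin n) (Fin n) ℂ) (hA : A.IsHermitian)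
    (i : Fin n) : ℝ :=
  (hA.eigenvalues ∘ Tuple.sort hA.eigenvalues) i.rev

/-- The `i`-th largest singular value of a matrix. -/
noncomputable def singDesc {n : ℕ} (Z : Matrix (Fin n) (Fin n) ℂ) (i : Fin n) : ℝ :=
  eigDesc (absM Z) (Matrix.posSemidef_conjTranspose_mul_self Z).posSemidef_sqrt.1 i

/-! The truncated shift `Z` is a partial isometry with `Z*Z = diag(1,1,0)` and
`ZZ* = diag(0,1,1)`, so `|Z|^p` and `|Z*|^p` are these two projections for every `p ≠ 0`; their
mean is `diag(1/2,1,1/2)`, whose `1/p`-th power has smallest singular value `2^{-1/p}`.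
On the other side, `Re Z` has characteristic polynomial `X(X² - 1/2)`; the singular values of a
Hermitian matrix are the absolute values of its eigenvalues, so `Re Z` and its unitary conjugate
`Im Z` both have singular values `(2^{-1/2}, 2^{-1/2}, 0)`. -/

open Polynomial

namespace Matrix

variable {n : Type*} [Fintype n] [DecidableEq n]

theorem mul_diagonal_comp_eq_of_mul_diagonal_eq {R : Type*} [CommRing R] [IsDomain R]
    {U : Matrix n n R} {a b : n → R} (h : U * diagonal a = diagonal b * U) (g : R → R) :
    U * diagonal (g ∘ a) = diagonal (g ∘ b) * U := by
  ext i j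
  have hij := congrFun (congrFun h i) j
  simp only [mul_diagonal, diagonal_mul, Function.comp_apply] at hij ⊢
  rcases eq_or_ne (U i j) 0 with hU | hU
  · simp [hU]
  · rw [mul_comm, mul_right_cancel₀ hU (hij.symm.trans (mul_comm _ _))]

/-- A unitary `U` diagonalising `diagonal d` can only mix coordinates on which `d` takes the same
value, so it also diagonalises `diagonal (f ∘ d)`. -/
theorem cfc_diagonal_ofReal (f : ℝ → ℝ) (d : n → ℝ) :
    cfc f (diagonal (Complex.ofReal ∘ d)) = diagonal (Complex.ofReal ∘ f ∘ d) := by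
  have hA : (diagonal (Complex.ofReal ∘ d)).IsHermitian := by
    simp [isHermitian_diagonal_iff, IsSelfAdjoint]
  rw [hA.cfc_eq, IsHermitian.cfc, Unitary.conjStarAlgAut_apply]
  set U : Matrix n n ℂ := (hA.eigenvectorUnitary : Matrix n n ℂ)
  have hUU : star U * U = 1 := Unitary.star_mul_self_of_mem hA.eigenvectorUnitary.2
  have hUU' : U * star U = 1 := Unitary.mul_star_self_of_mem hA.eigenvectorUnitary.2
  have hdiag : U * diagonal (Complex.ofReal ∘ hA.eigenvalues) =
      diagonal (Complex.ofReal ∘ d) * U := by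
    conv_rhs => rw [hA.spectral_theorem, Unitary.conjStarAlgAut_apply]
    rw [Matrix.mul_assoc, hUU, Matrix.mul_one]
    rfl
  have := mul_diagonal_comp_eq_of_mul_diagonal_eq hdiag (fun z => (f z.re : ℂ))
  simp only [Function.comp_def, Complex.ofReal_re, RCLike.ofReal_eq_complex_ofReal] at this ⊢
  rw [this, Matrix.mul_assoc, hUU', Matrix.mul_one]

theorem charpoly_mul_mul_star_of_mem_unitary {R : Type*} [CommRing R] [StarRing R]
    {U : Matrix n n R} (hU : U ∈ unitary (Matrix n n R)) (A : Matrix n n R) :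
    (U * A * star U).charpoly = A.charpoly := by
  rw [charpoly_mul_comm, ← Matrix.mul_assoc, Unitary.star_mul_self_of_mem hU, Matrix.one_mul]

theorem IsHermitian.map_eigenvalues_eq_of_charpoly_eq {A : Matrix n n ℂ} (hA : A.IsHermitian)
    {s : Multiset ℝ} (h : A.charpoly = (s.map fun r : ℝ => X - C (r : ℂ)).prod) :
    Finset.univ.val.map hA.eigenvalues = s := by
  have hs : (s.map fun r : ℝ => X - C (r : ℂ)) = (s.map Complex.ofReal).map (X - C ·) := by
    rw [Multiset.map_map]; rfl
  have hroots := hA.roots_charpoly_eq_eigenvalues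
  rw [h, hs, roots_multiset_prod_X_sub_C, ← Multiset.map_map] at hroots
  exact (Multiset.map_injective Complex.ofReal_injective hroots).symm

theorem PosSemidef.sqrt_eq_cfc {𝕜 : Type*} [RCLike 𝕜] {A : Matrix n n 𝕜} (hA : A.PosSemidef) :
    hA.sqrt = cfc Real.sqrt A := by
  rw [hA.1.cfc_eq, IsHermitian.cfc, sqrt, Unitary.conjStarAlgAut_apply]

end Matrix

theorem absM_eq_cfc_sqrt {m n : ℕ} (X : Matrix (Fin m) (Fin n) ℂ) :
    absM X = cfc Real.sqrt (Xᴴ * X) :=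
  PosSemidef.sqrt_eq_cfc _

theorem absM_eq_cfc_abs {n : ℕ} {A : Matrix (Fin n) (Fin n) ℂ} (hA : A.IsHermitian) :
    absM A = cfc (fun x : ℝ => |x|) A := by
  rw [absM_eq_cfc_sqrt, hA.eq, ← pow_two, ← cfc_pow_id (R := ℝ) A 2 hA.isSelfAdjoint,
    ← cfc_comp Real.sqrt (· ^ 2) A hA.isSelfAdjoint]
  simp only [Function.comp_def, Real.sqrt_sq_eq_abs]

theorem mrpow_diagonal_ofReal {n : ℕ} (d : Fin n → ℝ) (p : ℝ) :
    mrpow (diagonal (Complex.ofReal ∘ d)) p = diagonal (Complex.ofReal ∘ (· ^ p) ∘ d) :=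
  cfc_diagonal_ofReal _ d

theorem univ_val_map_fin_three {α : Type*} (f : Fin 3 → α) :
    Finset.univ.val.map f = {f 0, f 1, f 2} := by
  simp only [Fin.univ_val_map, List.ofFn_succ, Fin.succ_zero_eq_one, Fin.succ_one_eq_two,
    List.ofFn_zero, Multiset.insert_eq_cons]
  rfl

theorem eigDesc_eq_of_antitone {n : ℕ} {A : Matrix (Fin n) (Fin n) ℂ} (hA : A.IsHermitian)
    {v : Fin n → ℝ} (hv : Antitone v)
    (h : Finset.univ.val.map hA.eigenvalues = Finset.univ.val.map v) :
    eigDesc A hA = v := by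
  set w : Fin n → ℝ := fun i => (hA.eigenvalues ∘ Tuple.sort hA.eigenvalues) i.rev
  have hw : Antitone w := (Tuple.monotone_sort hA.eigenvalues).comp_antitone Fin.rev_anti
  have hmap : Finset.univ.val.map w = Finset.univ.val.map v :=
    calc Finset.univ.val.map w
        = (Finset.univ.val.map (Fin.revPerm.trans (Tuple.sort hA.eigenvalues))).map
            hA.eigenvalues := by rw [Multiset.map_map]; rfl
      _ = Finset.univ.val.map v := by rw [Multiset.map_univ_val_equiv, h]
  rw [Fin.univ_val_map, Fin.univ_val_map, Multiset.coe_eq_coe] at hmap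
  exact List.ofFn_injective (hmap.eq_of_sortedGE hw.sortedGE_ofFn hv.sortedGE_ofFn)

theorem singDesc_eq_of_charpoly_eq {n : ℕ} {A : Matrix (Fin n) (Fin n) ℂ} (hA : A.IsHermitian)
    {s : Multiset ℝ} (hs : A.charpoly = (s.map fun r : ℝ => X - C (r : ℂ)).prod)
    {v : Fin n → ℝ} (hv : Antitone v) (h : Finset.univ.val.map v = s.map (fun x : ℝ => |x|)) :
    singDesc A = v := by
  funext i
  refine congrFun (eigDesc_eq_of_antitone _ hv ?_) i
  apply IsHermitian.map_eigenvalues_eq_of_charpoly_eq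
  rw [absM_eq_cfc_abs hA, hA.charpoly_cfc_eq, h, ← hA.map_eigenvalues_eq_of_charpoly_eq hs,
    Finset.prod_eq_multiset_prod, Multiset.map_map, Multiset.map_map]
  rfl

theorem singDesc_diagonal_ofReal {n : ℕ} (d : Fin n → ℝ) {v : Fin n → ℝ} (hv : Antitone v)
    (h : Finset.univ.val.map v = Finset.univ.val.map (fun i => |d i|)) :
    singDesc (diagonal (Complex.ofReal ∘ d)) = v := by
  refine singDesc_eq_of_charpoly_eq (s := Finset.univ.val.map d) ?_ ?_ hv ?_
  · simp [isHermitian_diagonal_iff, IsSelfAdjoint]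
  · rw [charpoly_diagonal, Finset.prod_eq_multiset_prod, Multiset.map_map]
    rfl
  · rw [h, Multiset.map_map]
    rfl

theorem sq_two_rpow_neg_half : ((2:ℝ) ^ (-(1/2) : ℝ)) ^ 2 = 2⁻¹ := by
  rw [← Real.rpow_natCast, ← Real.rpow_mul zero_le_two]
  norm_num

def truncShift : Matrix (Fin 3) (Fin 3) ℂ := of ![![0, 0, 0], ![1, 0, 0], ![0, 1, 0]]

theorem truncShift_re : (2:ℂ)⁻¹ • (truncShift + truncShiftᴴ) =
    of ![![0, 2⁻¹, 0], ![2⁻¹, 0, 2⁻¹], ![0, 2⁻¹, 0]] := by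
  ext i j
  fin_cases i <;> fin_cases j <;> simp [truncShift]

theorem isHermitian_truncShift_re : ((2:ℂ)⁻¹ • (truncShift + truncShiftᴴ)).IsHermitian := by
  rw [truncShift_re]
  ext i j
  fin_cases i <;> fin_cases j <;> simp

theorem charpoly_truncShift_re {ρ : ℝ} (hρ : ρ ^ 2 = 2⁻¹) :
    ((2:ℂ)⁻¹ • (truncShift + truncShiftᴴ)).charpoly =
      (({0, ρ, -ρ} : Multiset ℝ).map fun r : ℝ => X - C (r : ℂ)).prod := by
  have hρC : C (ρ : ℂ) ^ 2 = C (2⁻¹ : ℂ) := by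
    rw [← map_pow, ← Complex.ofReal_pow, hρ]
    norm_num
  have hC : C (2⁻¹ : ℂ) * 2 = 1 := by
    rw [← map_ofNat C 2, ← map_mul, inv_mul_cancel₀ two_ne_zero, map_one]
  rw [truncShift_re, charpoly, det_fin_three]
  simp only [Fin.isValue, charmatrix_apply_eq, charmatrix_apply_ne, of_apply, cons_val',
    cons_val_zero, cons_val_fin_one, cons_val_one, cons_val, ne_eq, Fin.reduceEq,
    not_false_eq_true, map_zero, sub_zero, mul_neg, neg_mul, neg_neg, neg_zero, mul_zero,
    add_zero, zero_mul, Multiset.insert_eq_cons, Multiset.map_cons, Multiset.map_singleton,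
    Complex.ofReal_zero, Complex.ofReal_neg, map_neg, sub_neg_eq_add, Multiset.prod_cons,
    Multiset.prod_singleton]
  linear_combination X * hρC - X * C 2⁻¹ * hC

theorem truncShift_im_eq_conj_re : (2 * Complex.I)⁻¹ • (truncShift - truncShiftᴴ) =
    diagonal ![1, -Complex.I, -1] * ((2:ℂ)⁻¹ • (truncShift + truncShiftᴴ)) *
      (diagonal ![1, -Complex.I, -1])ᴴ := by
  rw [truncShift_re]
  ext i j
  fin_cases i <;> fin_cases j <;> simp [truncShift, mul_apply, Fin.sum_univ_three, diagonal]
  all_goals ring_nf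

theorem diagonal_one_neg_I_neg_one_mem_unitary :
    diagonal ![1, -Complex.I, -1] ∈ unitary (Matrix (Fin 3) (Fin 3) ℂ) := by
  rw [Unitary.mem_iff, star_eq_conjTranspose, diagonal_conjTranspose, diagonal_mul_diagonal,
    diagonal_mul_diagonal, ← diagonal_one]
  constructor <;> congr 1 <;> funext i <;> fin_cases i <;> simp

theorem singDesc_eq_of_charpoly_eq_truncShift_re {A : Matrix (Fin 3) (Fin 3) ℂ}
    (hA : A.IsHermitian) (h : A.charpoly = ((2:ℂ)⁻¹ • (truncShift + truncShiftᴴ)).charpoly)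
    {ρ : ℝ} (hρ0 : 0 ≤ ρ) (hρ : ρ ^ 2 = 2⁻¹) :
    singDesc A = ![ρ, ρ, 0] := by
  refine singDesc_eq_of_charpoly_eq hA (h.trans (charpoly_truncShift_re hρ)) ?_ ?_
  · simp [antitone_vecCons, hρ0]
  · rw [univ_val_map_fin_three]
    simp only [Multiset.insert_eq_cons, Multiset.map_cons, Multiset.map_singleton, abs_zero,
      abs_neg, abs_of_nonneg hρ0, Matrix.cons_val]
    rw [Multiset.cons_swap 0 ρ]
    exact congrArg _ (Multiset.cons_swap _ _ _)

theorem absM_truncShift : absM truncShift = diagonal (Complex.ofReal ∘ ![1, 1, 0]) := by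
  have h : truncShiftᴴ * truncShift = diagonal (Complex.ofReal ∘ ![1, 1, 0]) := by
    ext i j
    fin_cases i <;> fin_cases j <;> simp [truncShift, mul_apply, Fin.sum_univ_three]
  rw [absM_eq_cfc_sqrt, h, cfc_diagonal_ofReal]
  congr 2
  funext i
  fin_cases i <;> simp

theorem absM_conjTranspose_truncShift :
    absM truncShiftᴴ = diagonal (Complex.ofReal ∘ ![0, 1, 1]) := by
  have h : truncShiftᴴᴴ * truncShiftᴴ = diagonal (Complex.ofReal ∘ ![0, 1, 1]) := by
    ext i j
    fin_cases i <;> fin_cases j <;> simp [truncShift, mul_apply, Fin.sum_univ_three]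
  rw [absM_eq_cfc_sqrt, h, cfc_diagonal_ofReal]
  congr 2
  funext i
  fin_cases i <;> simp

theorem powerMean_abs_truncShift {p : ℝ} (hp : p ≠ 0) :
    (2:ℂ)⁻¹ • (mrpow (absM truncShift) p + mrpow (absM truncShiftᴴ) p) =
      diagonal (Complex.ofReal ∘ ![2⁻¹, 1, 2⁻¹]) := by
  rw [absM_truncShift, absM_conjTranspose_truncShift, mrpow_diagonal_ofReal,
    mrpow_diagonal_ofReal]
  ext i j
  fin_cases i <;> fin_cases j <;> simp [Real.zero_rpow hp]
  all_goals norm_num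

theorem singDesc_rpow_powerMean_abs_truncShift {p : ℝ} (hp : 0 < p) :
    singDesc (mrpow ((2:ℂ)⁻¹ • (mrpow (absM truncShift) p + mrpow (absM truncShiftᴴ) p))
      (1 / p)) = ![1, (2:ℝ) ^ (-(1/p)), (2:ℝ) ^ (-(1/p))] := by
  set c : ℝ := (2:ℝ) ^ (-(1/p)) with hc
  have hhalf : (2⁻¹ : ℝ) ^ (1 / p) = c := by
    rw [hc, Real.inv_rpow zero_le_two, Real.rpow_neg zero_le_two]
  have hpos : 0 ≤ c := by positivity
  have hle : c ≤ 1 :=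
    Real.rpow_le_one_of_one_le_of_nonpos one_le_two (by rw [neg_nonpos]; positivity)
  rw [powerMean_abs_truncShift hp.ne', mrpow_diagonal_ofReal]
  apply singDesc_diagonal_ofReal
  · simp [antitone_vecCons, hle]
  · rw [univ_val_map_fin_three, univ_val_map_fin_three]
    simp only [Function.comp_apply, Matrix.cons_val_zero, Matrix.cons_val_one,
      Matrix.cons_val_two, Matrix.head_cons, Matrix.tail_cons, hhalf, Real.one_rpow, abs_one,
      abs_of_nonneg hpos, Multiset.insert_eq_cons]
    exact Multiset.cons_swap _ _ _

/-- For the 3×3 truncated shift `Z`: `Re Z` has eigenvalues `0, ±2^{-1/2}`; `Im Z` is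
unitarily similar to `Re Z` via `D = diag(1,-i,-1)`; the singular values of `Re Z` and
`Im Z` are `(2^{-1/2}, 2^{-1/2}, 0)`; and for every `p > 2`,
`μ₃(((|Z|^p+|Z*|^p)/2)^{1/p}) = 2^{-1/p} > 2^{-1/2} = μ₃(Re Z) + μ₁(Im Z)`. -/
theorem truncated_shift_counterexample :
    let Z : Matrix (Fin 3) (Fin 3) ℂ := Matrix.of ![![0,0,0], ![1,0,0], ![0,1,0]]
    let R : Matrix (Fin 3) (Fin 3) ℂ := ((2:ℂ)⁻¹) • (Z + Zᴴ)
    let Im : Matrix (Fin 3) (Fin 3) ℂ := ((2 * Complex.I)⁻¹) • (Z - Zᴴ)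
    let D : Matrix (Fin 3) (Fin 3) ℂ := Matrix.diagonal ![1, -Complex.I, -1]
    (∀ hR : R.IsHermitian,
      Finset.univ.val.map hR.eigenvalues
        = ({0, (2:ℝ) ^ (-(1/2) : ℝ), -((2:ℝ) ^ (-(1/2) : ℝ))} : Multiset ℝ)) ∧
    Im = D * R * Dᴴ ∧
    singDesc R = ![(2:ℝ) ^ (-(1/2) : ℝ), (2:ℝ) ^ (-(1/2) : ℝ), 0] ∧
    singDesc Im = ![(2:ℝ) ^ (-(1/2) : ℝ), (2:ℝ) ^ (-(1/2) : ℝ), 0] ∧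
    ∀ p : ℝ, 2 < p →
      singDesc (mrpow (((2:ℂ)⁻¹) • (mrpow (absM Z) p + mrpow (absM Zᴴ) p)) (1 / p))
          ⟨2, by norm_num⟩ = (2:ℝ) ^ (-(1/p)) ∧
      (2:ℝ) ^ (-(1/p)) > (2:ℝ) ^ (-(1/2) : ℝ) ∧
      singDesc R ⟨2, by norm_num⟩ + singDesc Im ⟨0, by norm_num⟩
        = (2:ℝ) ^ (-(1/2) : ℝ) := by
  intro Z R Im D
  have hR : R.IsHermitian := isHermitian_truncShift_re
  have hIm : Im = D * R * Dᴴ := truncShift_im_eq_conj_re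
  have hρ0 : 0 ≤ (2:ℝ) ^ (-(1/2) : ℝ) := by positivity
  have hsR : singDesc R = ![(2:ℝ) ^ (-(1/2) : ℝ), (2:ℝ) ^ (-(1/2) : ℝ), 0] :=
    singDesc_eq_of_charpoly_eq_truncShift_re hR rfl hρ0 sq_two_rpow_neg_half
  have hsIm : singDesc Im = ![(2:ℝ) ^ (-(1/2) : ℝ), (2:ℝ) ^ (-(1/2) : ℝ), 0] := by
    rw [hIm]
    exact singDesc_eq_of_charpoly_eq_truncShift_re (isHermitian_mul_mul_conjTranspose D hR)
      (charpoly_mul_mul_star_of_mem_unitary diagonal_one_neg_I_neg_one_mem_unitary R) hρ0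
      sq_two_rpow_neg_half
  refine ⟨fun hR' => hR'.map_eigenvalues_eq_of_charpoly_eq
    (charpoly_truncShift_re sq_two_rpow_neg_half), hIm, hsR, hsIm, fun p hp => ⟨?_, ?_, ?_⟩⟩
  · exact congrFun (singDesc_rpow_powerMean_abs_truncShift (by linarith)) 2
  · have hp' : 1 / p < 1 / 2 := one_div_lt_one_div_of_lt two_pos hp
    exact Real.rpow_lt_rpow_of_exponent_lt one_lt_two (by linarith)
  · rw [hsR, hsIm]
    simp
end

section
/- Isometry decomposition of positive block matrices: let m ≥ 2 and let H ∈ M_{mn}(ℂ) be positive semidefinite, written as an m×m array of n×n blocks H = [H_{ij}]. Then there exist isometries V₁, …, V_m ∈ M_{mn,n}(ℂ) (V_k*V_k = Iₙ) such that H = Σ_{k=1}^m V_k H_{kk} V_k*. -/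
/-!
Write `H = R * R` with `R = √H` Hermitian and cut `R` into its block columns `R k`; then
`H = ∑ k, R k * (R k)ᴴ` and the diagonal block `H_kk` is `(R k)ᴴ * R k`. So it suffices that
`A * Aᴴ = V * (Aᴴ * A) * Vᴴ` for every tall matrix `A` and some isometry `V`. After diagonalising
`Aᴴ * A` by a unitary `U`, the columns of `A * U` are orthogonal; normalising the nonzero ones and
completing them to an orthonormal family gives `A * U = W * Σ` with `W` an isometry and `Σ`
diagonal, hence `A * Aᴴ = W * Σ ^ 2 * Wᴴ = (W * Uᴴ) * (Aᴴ * A) * (W * Uᴴ)ᴴ`.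
-/

open Matrix ComplexOrder

theorem exists_orthonormal_smul_eq_of_pairwise_inner_eq_zero {𝕜 E κ : Type*} [RCLike 𝕜]
    [NormedAddCommGroup E] [InnerProductSpace 𝕜 E] [FiniteDimensional 𝕜 E] [Fintype κ]
    {f : κ → E} (hf : Pairwise fun i j => inner 𝕜 (f i) (f j) = 0)
    (hκ : Fintype.card κ ≤ Module.finrank 𝕜 E) :
    ∃ w : κ → E, Orthonormal 𝕜 w ∧ ∀ i, (‖f i‖ : 𝕜) • w i = f i := by
  classical
  let u : κ → E := fun i => (‖f i‖⁻¹ : 𝕜) • f i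
  -- padding `κ` up to the dimension of `E` lets us extend to an orthonormal basis
  let v : κ ⊕ Fin (Module.finrank 𝕜 E - Fintype.card κ) → E := Sum.elim u 0
  let s : Set (κ ⊕ Fin (Module.finrank 𝕜 E - Fintype.card κ)) := Sum.inl '' {i | f i ≠ 0}
  have hv : Orthonormal 𝕜 (s.domRestrict v) := by
    rw [orthonormal_iff_ite]
    rintro ⟨_, i, hi, rfl⟩ ⟨_, j, hj, rfl⟩
    by_cases hij : i = j
    · subst hij
      simp [Set.domRestrict_apply, v, u, inner_self_eq_norm_sq_to_K, norm_smul_inv_norm hi]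
    · simp [Set.domRestrict_apply, v, u, inner_smul_left, inner_smul_right, hf hij,
        Subtype.ext_iff, hij]
  obtain ⟨b, hb⟩ := hv.exists_orthonormalBasis_extension_of_card_eq (by simp; omega)
  refine ⟨b ∘ Sum.inl, b.orthonormal.comp _ Sum.inl_injective, fun i => ?_⟩
  by_cases hi : f i = 0
  · simp [hi]
  · simp [hb _ ⟨i, hi, rfl⟩, v, u, smul_smul, hi]

namespace Matrix

theorem inner_toLp_transpose {𝕜 ι κ : Type*} [RCLike 𝕜] [Fintype ι] (C : Matrix ι κ 𝕜)
    (i j : κ) : inner 𝕜 (WithLp.toLp 2 (Cᵀ i)) (WithLp.toLp 2 (Cᵀ j)) = (Cᴴ * C) i j := by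
  simp [EuclideanSpace.inner_toLp_toLp, dotProduct, mul_apply, mul_comm]

theorem mul_eq_sum_submatrix_prodMk {α ι κ μ ι' : Type*} [Fintype κ] [Fintype μ]
    [NonUnitalNonAssocSemiring α] (M : Matrix ι (μ × κ) α) (N : Matrix (μ × κ) ι' α) :
    M * N = ∑ k, M.submatrix id (Prod.mk k) * N.submatrix (Prod.mk k) id := by
  ext a b
  simp [mul_apply, sum_apply, Fintype.sum_prod_type]

open scoped MatrixOrder in
theorem PosSemidef.exists_isHermitian_mul_self_eq {𝕜 n : Type*} [RCLike 𝕜] [Fintype n]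
    [DecidableEq n] {H : Matrix n n 𝕜} (hH : H.PosSemidef) :
    ∃ R : Matrix n n 𝕜, R.IsHermitian ∧ R * R = H :=
  ⟨CFC.sqrt H, (CFC.sqrt_nonneg H).posSemidef.isHermitian, CFC.sqrt_mul_sqrt_self H hH.nonneg⟩

section Isometry

variable {𝕜 ι κ : Type*} [RCLike 𝕜] [Fintype ι] [Fintype κ] [DecidableEq κ]

theorem exists_isometry_mul_conjTranspose_eq_of_isDiag (C : Matrix ι κ 𝕜)
    (hC : (Cᴴ * C).IsDiag) (hκ : Fintype.card κ ≤ Fintype.card ι) :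
    ∃ W : Matrix ι κ 𝕜, Wᴴ * W = 1 ∧ C * Cᴴ = W * (Cᴴ * C) * Wᴴ := by
  obtain ⟨w, hw, hCw⟩ := exists_orthonormal_smul_eq_of_pairwise_inner_eq_zero
    (𝕜 := 𝕜) (f := fun j => WithLp.toLp 2 (Cᵀ j))
    (fun i j hij => (inner_toLp_transpose C i j).trans (hC hij))
    (by rwa [finrank_euclideanSpace])
  set W : Matrix ι κ 𝕜 := (of fun j => (w j).ofLp)ᵀ
  set σ : Matrix κ κ 𝕜 := diagonal fun j => (‖WithLp.toLp 2 (Cᵀ j)‖ : 𝕜)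
  have hW : Wᴴ * W = 1 := by
    ext i j
    rw [← inner_toLp_transpose, one_apply]
    exact orthonormal_iff_ite.mp hw i j
  have hσ : σᴴ = σ := by simp [σ, diagonal_conjTranspose]
  have hCW : C = W * σ := by
    ext a j
    simpa [W, σ, mul_comm, RCLike.real_smul_eq_coe_mul] using congrArg (·.ofLp a) (hCw j).symm
  refine ⟨W, hW, ?_⟩
  calc C * Cᴴ = W * (σ * σᴴ) * Wᴴ := by
        rw [hCW, conjTranspose_mul]; simp only [Matrix.mul_assoc]
    _ = W * (σᴴ * (Wᴴ * W) * σ) * Wᴴ := by rw [hW, Matrix.mul_one, hσ]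
    _ = W * (Cᴴ * C) * Wᴴ := by
        rw [hCW, conjTranspose_mul]; simp only [Matrix.mul_assoc]

theorem exists_isometry_mul_conjTranspose_eq (A : Matrix ι κ 𝕜)
    (hκ : Fintype.card κ ≤ Fintype.card ι) :
    ∃ V : Matrix ι κ 𝕜, Vᴴ * V = 1 ∧ A * Aᴴ = V * (Aᴴ * A) * Vᴴ := by
  have hB := isHermitian_conjTranspose_mul_self A
  set U : Matrix κ κ 𝕜 := (hB.eigenvectorUnitary : Matrix κ κ 𝕜)
  have hU' : U * Uᴴ = 1 := Unitary.coe_mul_star_self _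
  have hdiag : Uᴴ * (Aᴴ * A) * U = diagonal (RCLike.ofReal ∘ hB.eigenvalues) := by
    simpa [U, star_eq_conjTranspose] using hB.conjStarAlgAut_star_eigenvectorUnitary
  have hAU : ((A * U)ᴴ * (A * U)).IsDiag := by
    rw [conjTranspose_mul, Matrix.mul_assoc, ← Matrix.mul_assoc Aᴴ, ← Matrix.mul_assoc, hdiag]
    exact isDiag_diagonal _
  obtain ⟨W, hW, hWAU⟩ := exists_isometry_mul_conjTranspose_eq_of_isDiag (A * U) hAU hκ
  refine ⟨W * Uᴴ, ?_, ?_⟩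
  · rw [conjTranspose_mul, conjTranspose_conjTranspose, Matrix.mul_assoc, ← Matrix.mul_assoc Wᴴ,
      hW, Matrix.one_mul, hU']
  · calc A * Aᴴ = (A * U) * (A * U)ᴴ := by
          rw [conjTranspose_mul, Matrix.mul_assoc, ← Matrix.mul_assoc U, hU', Matrix.one_mul]
      _ = W * (Uᴴ * (Aᴴ * A) * U) * Wᴴ := by
          rw [hWAU, conjTranspose_mul]; simp only [Matrix.mul_assoc]
      _ = W * Uᴴ * (Aᴴ * A) * (W * Uᴴ)ᴴ := by
          rw [conjTranspose_mul, conjTranspose_conjTranspose]; simp only [Matrix.mul_assoc]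

end Isometry

end Matrix

theorem isometry_decomposition_of_posSemidef_block_general (m n : ℕ)
    (H : Matrix (Fin m × Fin n) (Fin m × Fin n) ℂ) (hH : H.PosSemidef) :
    ∃ V : Fin m → Matrix (Fin m × Fin n) (Fin n) ℂ,
      (∀ k, (V k)ᴴ * V k = 1) ∧
      H = ∑ k : Fin m,
        V k * Matrix.of (fun i j : Fin n => H (k, i) (k, j)) * (V k)ᴴ := by
  obtain ⟨R, hR, rfl⟩ := hH.exists_isHermitian_mul_self_eq
  let blockCol (k : Fin m) : Matrix (Fin m × Fin n) (Fin n) ℂ := R.submatrix id (Prod.mk k)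
  have hdiag (k : Fin m) :
      (blockCol k)ᴴ * blockCol k = (R * R).submatrix (Prod.mk k) (Prod.mk k) := by
    rw [conjTranspose_submatrix, ← submatrix_mul _ _ _ _ _ Function.bijective_id, hR.eq]
  choose V hV hRV using fun k => exists_isometry_mul_conjTranspose_eq (blockCol k)
    (Fintype.card_le_of_injective _ (Prod.mk_right_injective k))
  refine ⟨V, hV, ?_⟩
  calc R * R = R * Rᴴ := by rw [hR.eq]
    _ = ∑ k, blockCol k * (blockCol k)ᴴ := by
        rw [mul_eq_sum_submatrix_prodMk]; simp only [conjTranspose_submatrix, blockCol]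
    _ = _ := Finset.sum_congr rfl fun k _ => by rw [hRV, hdiag]; rfl

/-- Isometry decomposition of a positive semidefinite block matrix in terms of its
diagonal blocks. -/
theorem isometry_decomposition_of_posSemidef_block (m n : ℕ) (hm : 2 ≤ m)
    (H : Matrix (Fin m × Fin n) (Fin m × Fin n) ℂ) (hH : H.PosSemidef) :
    ∃ V : Fin m → Matrix (Fin m × Fin n) (Fin n) ℂ,
      (∀ k, (V k)ᴴ * V k = 1) ∧
      H = ∑ k : Fin m,
        V k * Matrix.of (fun i j : Fin n => H (k, i) (k, j)) * (V k)ᴴ :=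
  isometry_decomposition_of_posSemidef_block_general m n H hH
end

section
/- There do not exist isometries U₁, U₂, U₃, U₄ ∈ M_{3n,n}(ℂ) such that |A+B|² ⊕ |B+C|² ⊕ |A+C|² = U₁|A+B+C|²U₁* + U₂|A|²U₂* + U₃|B|²U₃* + U₄|C|²U₄* holds for all A, B, C ∈ Mₙ(ℂ). Indeed, taking A = B = C = Iₙ, the identity would read 4·I_{3n} = 9·U₁U₁* + U₂U₂* + U₃U₃* + U₄U₄*, forcing 4·I_{3n} ≥ 9·U₁U₁*, which contradicts ‖9·U₁U₁*‖_∞ = 9 > 4 since U₁U₁* is a nonzero orthogonal projection. -/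
/-!
Specializing the identity to `A = B = C = 1` gives `4 = 9 U₁U₁ᴴ + U₂U₂ᴴ + U₃U₃ᴴ + U₄U₄ᴴ`, so
`9 U₁U₁ᴴ ≤ 4` in the Loewner order. But `U₁U₁ᴴ` fixes every unit vector in the range of the
isometry `U₁`, and evaluating the quadratic form there gives `9 ≤ 4`.
-/

open Matrix ComplexOrder
open scoped MatrixOrder

namespace Matrix

variable {m n 𝕜 : Type*} [Fintype m] [Fintype n] [DecidableEq n] [RCLike 𝕜] {U : Matrix m n 𝕜}

lemma mul_conjTranspose_mulVec_mulVec_of_isometry (hU : Uᴴ * U = 1) (v : n → 𝕜) :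
    (U * Uᴴ) *ᵥ (U *ᵥ v) = U *ᵥ v := by
  rw [mulVec_mulVec, Matrix.mul_assoc, hU, Matrix.mul_one]

lemma star_mulVec_dotProduct_mulVec_of_isometry (hU : Uᴴ * U = 1) (v : n → 𝕜) :
    star (U *ᵥ v) ⬝ᵥ (U *ᵥ v) = star v ⬝ᵥ v := by
  rw [star_mulVec, dotProduct_mulVec, vecMul_vecMul, hU, vecMul_one]

theorem le_of_smul_mul_conjTranspose_le_smul_one [DecidableEq m] [Nonempty n]
    (hU : Uᴴ * U = 1) {c d : ℝ}
    (h : d • (U * Uᴴ) ≤ c • (1 : Matrix m m 𝕜)) : d ≤ c := by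
  obtain ⟨i⟩ := ‹Nonempty n›
  set x := U *ᵥ Pi.single i 1
  have hx : star x ⬝ᵥ x = 1 := by
    rw [star_mulVec_dotProduct_mulVec_of_isometry hU]
    simp
  have hquad := (le_iff.mp h).dotProduct_mulVec_nonneg x
  rw [sub_mulVec, smul_mulVec, smul_mulVec, one_mulVec,
    mul_conjTranspose_mulVec_mulVec_of_isometry hU, dotProduct_sub, dotProduct_smul,
    dotProduct_smul, hx, ← sub_smul, RCLike.real_smul_eq_coe_mul, mul_one] at hquad
  simpa using hquad

end Matrix

/-- There are no four isometries `U₁,…,U₄ ∈ M_{3n,n}` realizing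
`|A+B|² ⊕ |B+C|² ⊕ |A+C|² = U₁|A+B+C|²U₁ᴴ + U₂|A|²U₂ᴴ + U₃|B|²U₃ᴴ + U₄|C|²U₄ᴴ`
for all `A, B, C ∈ Mₙ(ℂ)`. -/
theorem no_four_isometries (n : ℕ) (hn : 0 < n) :
    ¬ ∃ U₁ U₂ U₃ U₄ : Matrix (Fin n × Fin 3) (Fin n) ℂ,
        U₁ᴴ * U₁ = 1 ∧ U₂ᴴ * U₂ = 1 ∧ U₃ᴴ * U₃ = 1 ∧ U₄ᴴ * U₄ = 1 ∧
        ∀ A B C : Matrix (Fin n) (Fin n) ℂ,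
          Matrix.blockDiagonal
              ![(A + B)ᴴ * (A + B), (B + C)ᴴ * (B + C), (A + C)ᴴ * (A + C)]
            = U₁ * ((A + B + C)ᴴ * (A + B + C)) * U₁ᴴ + U₂ * (Aᴴ * A) * U₂ᴴ
              + U₃ * (Bᴴ * B) * U₃ᴴ + U₄ * (Cᴴ * C) * U₄ᴴ := by
  rintro ⟨U₁, U₂, U₃, U₄, hU₁, -, -, -, h⟩
  have hconst : ![(4 : Matrix (Fin n) (Fin n) ℂ), 4, 4] = 4 := by
    funext i; fin_cases i <;> rfl
  have hblock : blockDiagonal (4 : Fin 3 → Matrix (Fin n) (Fin n) ℂ) = 4 :=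
    map_ofNat (blockDiagonalRingHom (Fin n) (Fin 3) ℂ) 4
  have hones := h 1 1 1
  norm_num [one_add_one_eq_two, hconst, hblock] at hones
  have hnine : U₁ * (9 : Matrix (Fin n) (Fin n) ℂ) * U₁ᴴ = (9 : ℝ) • (U₁ * U₁ᴴ) := by
    rw [show (9 : Matrix (Fin n) (Fin n) ℂ) = (9 : ℝ) • 1 by norm_num [ofNat_smul_eq_nsmul],
      Matrix.mul_smul, Matrix.smul_mul, Matrix.mul_one]
  have hle : (9 : ℝ) • (U₁ * U₁ᴴ) ≤ (4 : ℝ) • 1 := by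
    rw [show (4 : ℝ) • (1 : Matrix (Fin n × Fin 3) (Fin n × Fin 3) ℂ) = 4 by
      norm_num [ofNat_smul_eq_nsmul], hones, hnine, add_assoc, add_assoc]
    exact le_add_of_nonneg_right <| add_nonneg (posSemidef_self_mul_conjTranspose U₂).nonneg <|
      add_nonneg (posSemidef_self_mul_conjTranspose U₃).nonneg
        (posSemidef_self_mul_conjTranspose U₄).nonneg
  have : Nonempty (Fin n) := ⟨⟨0, hn⟩⟩
  exact absurd (le_of_smul_mul_conjTranspose_le_smul_one hU₁ hle) (by norm_num)
end

section
/- Sharp scalar Clarkson–Euler inequality: for p ≥ 2 and complex numbers a, b, c, |a+b|^p + |b+c|^p + |c+a|^p ≤ 2^{p-2}(|a+b+c|^p + |a|^p + |b|^p + |c|^p), with the reverse inequality for 0 < p ≤ 2; equality holds for all p > 0 when a = b = −c ≠ 0, so the constant 2^{p-2} is optimal. -/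
/-!
By Euler's identity the three squared norms `‖a+b‖², ‖b+c‖², ‖c+a‖²` have the same sum as the four
squared norms `‖a+b+c‖², ‖a‖², ‖b‖², ‖c‖²`. Raising to the power `r = p/2 ≥ 1`, the sum of the
three `r`-th powers is at most the `r`-th power of their common sum (superadditivity), which by the
power mean inequality is at most `4^(r-1) = 2^(p-2)` times the sum of the four `r`-th powers. For
`r ≤ 1` both inequalities reverse.
-/

open Finset

namespace NNReal

theorem sq_rpow_div_two (x : ℝ≥0) (p : ℝ) : (x ^ 2) ^ (p / 2) = x ^ p := by
  rw [← rpow_natCast_mul, Nat.cast_ofNat, mul_div_cancel₀ _ two_ne_zero]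

theorem four_rpow_div_two_sub_one (p : ℝ) : (4 : ℝ≥0) ^ (p / 2 - 1) = 2 ^ (p - 2) := by
  rw [show (4 : ℝ≥0) = 2 ^ 2 by norm_num, ← rpow_natCast_mul]
  ring_nf

variable {ι κ : Type*} (s : Finset ι) (f : ι → ℝ≥0) {p : ℝ}

theorem sum_rpow_le_rpow_sum (hp : 1 ≤ p) : ∑ i ∈ s, f i ^ p ≤ (∑ i ∈ s, f i) ^ p := by
  classical
  induction s using Finset.induction_on with
  | empty => simp
  | insert i s hi ih =>
    rw [sum_insert hi, sum_insert hi]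
    exact (add_le_add_right ih _).trans (add_rpow_le_rpow_add _ _ hp)

theorem rpow_sum_le_sum_rpow (hp₀ : 0 < p) (hp₁ : p ≤ 1) :
    (∑ i ∈ s, f i) ^ p ≤ ∑ i ∈ s, f i ^ p := by
  classical
  induction s using Finset.induction_on with
  | empty => simp [hp₀.ne']
  | insert i s hi ih =>
    rw [sum_insert hi, sum_insert hi]
    exact (rpow_add_le_add_rpow _ _ hp₀.le hp₁).trans (add_le_add_right ih _)

theorem sum_rpow_le_card_rpow_mul_rpow_sum (hp₀ : 0 < p) (hp₁ : p ≤ 1) :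
    ∑ i ∈ s, f i ^ p ≤ (#s : ℝ≥0) ^ (1 - p) * (∑ i ∈ s, f i) ^ p := by
  have h := rpow_sum_le_const_mul_sum_rpow s (fun i ↦ f i ^ p) (one_le_one_div hp₀ hp₁)
  simp only [← rpow_mul, mul_one_div_cancel hp₀.ne', rpow_one] at h
  calc ∑ i ∈ s, f i ^ p = ((∑ i ∈ s, f i ^ p) ^ (1 / p)) ^ p := by
        rw [← rpow_mul, one_div_mul_cancel hp₀.ne', rpow_one]
    _ ≤ ((#s : ℝ≥0) ^ (1 / p - 1) * ∑ i ∈ s, f i) ^ p := by gcongr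
    _ = (#s : ℝ≥0) ^ (1 - p) * (∑ i ∈ s, f i) ^ p := by
        rw [mul_rpow, ← rpow_mul, sub_mul, one_div_mul_cancel hp₀.ne', one_mul]

variable (t : Finset κ) (g : κ → ℝ≥0)

theorem sum_rpow_le_card_rpow_mul_sum_rpow_of_sum_eq (h : ∑ i ∈ s, f i = ∑ j ∈ t, g j)
    (hp : 1 ≤ p) : ∑ i ∈ s, f i ^ p ≤ (#t : ℝ≥0) ^ (p - 1) * ∑ j ∈ t, g j ^ p :=
  (sum_rpow_le_rpow_sum s f hp).trans (h ▸ rpow_sum_le_const_mul_sum_rpow t g hp)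

theorem card_rpow_mul_sum_rpow_le_sum_rpow_of_sum_eq (h : ∑ i ∈ s, f i = ∑ j ∈ t, g j)
    (hp₀ : 0 < p) (hp₁ : p ≤ 1) : (#t : ℝ≥0) ^ (p - 1) * ∑ j ∈ t, g j ^ p ≤ ∑ i ∈ s, f i ^ p := by
  rcases t.eq_empty_or_nonempty with rfl | ht
  · simp
  calc (#t : ℝ≥0) ^ (p - 1) * ∑ j ∈ t, g j ^ p
      ≤ (#t : ℝ≥0) ^ (p - 1) * ((#t : ℝ≥0) ^ (1 - p) * (∑ j ∈ t, g j) ^ p) := by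
        gcongr; exact sum_rpow_le_card_rpow_mul_rpow_sum t g hp₀ hp₁
    _ = (∑ i ∈ s, f i) ^ p := by
        rw [← mul_assoc, ← rpow_add (by simpa using ht.ne_empty), h]; simp
    _ ≤ ∑ i ∈ s, f i ^ p := rpow_sum_le_sum_rpow s f hp₀ hp₁

end NNReal

section InnerProductSpace

variable {E : Type*} [NormedAddCommGroup E] [InnerProductSpace ℝ E] {p : ℝ}

theorem euler_parallelogram_law_with_norm (a b c : E) :
    ‖a + b‖ ^ 2 + ‖b + c‖ ^ 2 + ‖c + a‖ ^ 2 = ‖a + b + c‖ ^ 2 + ‖a‖ ^ 2 + ‖b‖ ^ 2 + ‖c‖ ^ 2 := by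
  simp only [norm_add_sq_real, inner_add_left]
  rw [real_inner_comm c a, real_inner_comm c b]
  ring

theorem euler_parallelogram_law_with_nnnorm (a b c : E) :
    ∑ i, ![‖a + b‖₊, ‖b + c‖₊, ‖c + a‖₊] i ^ 2 = ∑ j, ![‖a + b + c‖₊, ‖a‖₊, ‖b‖₊, ‖c‖₊] j ^ 2 := by
  simp only [Fin.sum_univ_three, Fin.sum_univ_four]
  apply NNReal.coe_injective
  push_cast
  exact euler_parallelogram_law_with_norm a b c

theorem clarkson_euler_of_two_le (hp : 2 ≤ p) (a b c : E) :
    ‖a + b‖ ^ p + ‖b + c‖ ^ p + ‖c + a‖ ^ p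
      ≤ (2 : ℝ) ^ (p - 2) * (‖a + b + c‖ ^ p + ‖a‖ ^ p + ‖b‖ ^ p + ‖c‖ ^ p) := by
  have key := NNReal.sum_rpow_le_card_rpow_mul_sum_rpow_of_sum_eq _ _ _ _
    (euler_parallelogram_law_with_nnnorm a b c) (p := p / 2) (by linarith)
  simp only [Nat.succ_eq_add_one, Nat.reduceAdd, Fin.sum_univ_three, Fin.sum_univ_four,
    Matrix.cons_val_zero, Matrix.cons_val_one, Matrix.cons_val, card_fin, Nat.cast_ofNat,
    NNReal.sq_rpow_div_two, NNReal.four_rpow_div_two_sub_one] at key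
  exact_mod_cast key

theorem clarkson_euler_of_le_two (hp₀ : 0 < p) (hp₂ : p ≤ 2) (a b c : E) :
    (2 : ℝ) ^ (p - 2) * (‖a + b + c‖ ^ p + ‖a‖ ^ p + ‖b‖ ^ p + ‖c‖ ^ p)
      ≤ ‖a + b‖ ^ p + ‖b + c‖ ^ p + ‖c + a‖ ^ p := by
  have key := NNReal.card_rpow_mul_sum_rpow_le_sum_rpow_of_sum_eq _ _ _ _
    (euler_parallelogram_law_with_nnnorm a b c) (p := p / 2) (by linarith) (by linarith)
  simp only [Nat.succ_eq_add_one, Nat.reduceAdd, Fin.sum_univ_three, Fin.sum_univ_four,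
    Matrix.cons_val_zero, Matrix.cons_val_one, Matrix.cons_val, card_fin, Nat.cast_ofNat,
    NNReal.sq_rpow_div_two, NNReal.four_rpow_div_two_sub_one] at key
  exact_mod_cast key

end InnerProductSpace

theorem clarkson_euler_self_self_neg {F : Type*} [NormedAddCommGroup F] [NormedSpace ℝ F]
    {p : ℝ} (hp : 0 < p) (a : F) :
    ‖a + a‖ ^ p + ‖a + -a‖ ^ p + ‖-a + a‖ ^ p
      = (2 : ℝ) ^ (p - 2) * (‖a + a + -a‖ ^ p + ‖a‖ ^ p + ‖a‖ ^ p + ‖-a‖ ^ p) := by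
  have h_two : ‖a + a‖ = 2 * ‖a‖ := by rw [← two_smul ℝ a, norm_smul, Real.norm_two]
  have h_four : (2 : ℝ) ^ (p - 2) * 4 = 2 ^ p := by
    rw [Real.rpow_sub two_pos]; norm_num
  rw [h_two, add_neg_cancel, neg_add_cancel, add_neg_cancel_right, norm_neg, norm_zero,
    Real.zero_rpow hp.ne', Real.mul_rpow zero_le_two (norm_nonneg a), ← h_four]
  ring

/-- Sharp scalar Clarkson–Euler inequality with constant `2^(p-2)`, reversed for
`0 < p ≤ 2`, with equality when `a = b = -c ≠ 0`. -/
theorem scalar_clarkson_euler :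
    (∀ p : ℝ, 2 ≤ p → ∀ a b c : ℂ,
        ‖a + b‖ ^ p + ‖b + c‖ ^ p + ‖c + a‖ ^ p
          ≤ (2:ℝ) ^ (p - 2) * (‖a + b + c‖ ^ p + ‖a‖ ^ p + ‖b‖ ^ p + ‖c‖ ^ p)) ∧
    (∀ p : ℝ, 0 < p → p ≤ 2 → ∀ a b c : ℂ,
        (2:ℝ) ^ (p - 2) * (‖a + b + c‖ ^ p + ‖a‖ ^ p + ‖b‖ ^ p + ‖c‖ ^ p)
          ≤ ‖a + b‖ ^ p + ‖b + c‖ ^ p + ‖c + a‖ ^ p) ∧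
    (∀ p : ℝ, 0 < p → ∀ a : ℂ, a ≠ 0 →
        ‖a + a‖ ^ p + ‖a + (-a)‖ ^ p + ‖(-a) + a‖ ^ p
          = (2:ℝ) ^ (p - 2) * (‖a + a + (-a)‖ ^ p + ‖a‖ ^ p + ‖a‖ ^ p + ‖(-a)‖ ^ p)) :=
  ⟨fun _ hp ↦ clarkson_euler_of_two_le hp, fun _ hp₀ hp₂ ↦ clarkson_euler_of_le_two hp₀ hp₂,
    fun _ hp a _ ↦ clarkson_euler_self_self_neg hp a⟩
end
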